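/- arXiv:1809.05668 — 3 statements merged into one kernel-verified Lean document; each statement's English description precedes it below -/
import Mathlib

section
/- A subspace L ⊆ ℝⁿ is (A,B,C,D)-output nulling if and only if its orthogonal complement L^⊥ is (Aᵀ,Cᵀ,Bᵀ,Dᵀ)-input containing. -/
/-!
Write `E × Y` for the (L²) product of the state and output spaces. `L` is output nulling iff
`(A x, C x) ∈ L × 0 + {(B u, D u)}` for every `x ∈ L`. By adjointness, the orthogonal complement
of `L × 0 + {(B u, D u)}` is `{(x', y') | x' ∈ Lᗮ, Bᵀ x' + Dᵀ y' = 0}`, the set of pairs on which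
input containment of `Lᗮ` is tested, and `(A x, C x)` is orthogonal to such a pair iff `x` is
orthogonal to `Aᵀ x' + Cᵀ y'`. In finite dimension a subspace is its double orthogonal complement,
so the two conditions coincide.
-/

open LinearMap WithLp
open scoped InnerProductSpace

namespace Submodule

variable {R M U Y : Type*} [Semiring R] [AddCommMonoid M] [AddCommMonoid U] [AddCommMonoid Y]
  [Module R M] [Module R U] [Module R Y]

def IsOutputNulling (A : M →ₗ[R] M) (B : U →ₗ[R] M) (C : M →ₗ[R] Y) (D : U →ₗ[R] Y)
    (V : Submodule R M) : Prop :=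
  ∀ x ∈ V, ∃ u, A x + B u ∈ V ∧ C x + D u = 0

def IsInputContaining (A : M →ₗ[R] M) (B : Y →ₗ[R] M) (C : M →ₗ[R] U) (D : Y →ₗ[R] U)
    (S : Submodule R M) : Prop :=
  ∀ x ∈ S, ∀ y, C x + D y = 0 → A x + B y ∈ S

end Submodule

section InnerProduct

variable {𝕜 E : Type*} [RCLike 𝕜] [NormedAddCommGroup E] [InnerProductSpace 𝕜 E]
  [FiniteDimensional 𝕜 E]

theorem LinearMap.mem_range_iff_forall_inner_eq_zero {V : Type*} [AddCommGroup V] [Module 𝕜 V]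
    (Φ : V →ₗ[𝕜] E) (x : E) :
    x ∈ range Φ ↔ ∀ w, (∀ v, ⟪Φ v, w⟫_𝕜 = 0) → ⟪x, w⟫_𝕜 = 0 := by
  rw [← (range Φ).orthogonal_orthogonal]
  simp only [Submodule.mem_orthogonal, LinearMap.mem_range, forall_exists_index,
    forall_apply_eq_imp_iff, inner_eq_zero_symm (x := x)]

variable {U Y : Type*} [NormedAddCommGroup U] [InnerProductSpace 𝕜 U]
  [NormedAddCommGroup Y] [InnerProductSpace 𝕜 Y] [FiniteDimensional 𝕜 U] [FiniteDimensional 𝕜 Y]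
  {A : E →ₗ[𝕜] E} {B : U →ₗ[𝕜] E} {C : E →ₗ[𝕜] Y} {D : U →ₗ[𝕜] Y} {L : Submodule 𝕜 E}

namespace Submodule

theorem IsOutputNulling.isInputContaining_orthogonal (h : L.IsOutputNulling A B C D) :
    Lᗮ.IsInputContaining A.adjoint C.adjoint B.adjoint D.adjoint := by
  intro x' hx' y' hBD
  rw [mem_orthogonal]
  intro x hx
  obtain ⟨u, hxu, hCD⟩ := h x hx
  calc ⟪x, A.adjoint x' + C.adjoint y'⟫_𝕜
      = ⟪A x + B u, x'⟫_𝕜 + ⟪C x + D u, y'⟫_𝕜 - ⟪u, B.adjoint x' + D.adjoint y'⟫_𝕜 := by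
        simp only [inner_add_right, inner_add_left, adjoint_inner_right]; ring
    _ = 0 := by
        rw [inner_right_of_mem_orthogonal hxu hx', hCD, inner_zero_left, hBD, inner_zero_right]
        ring

theorem isOutputNulling_of_isInputContaining_orthogonal
    (h : Lᗮ.IsInputContaining A.adjoint C.adjoint B.adjoint D.adjoint) :
    L.IsOutputNulling A B C D := by
  intro x hx
  let Φ : U × L →ₗ[𝕜] WithLp 2 (E × Y) := (WithLp.linearEquiv 2 𝕜 (E × Y)).symm ∘ₗ
    ((B ∘ₗ LinearMap.fst 𝕜 U L - L.subtype ∘ₗ LinearMap.snd 𝕜 U L).prod (D ∘ₗ LinearMap.fst 𝕜 U L))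
  have hΦ : -toLp 2 (A x, C x) ∈ range Φ := by
    rw [neg_mem_iff, mem_range_iff_forall_inner_eq_zero]
    rintro ⟨x', y'⟩ hw
    have hBD : B.adjoint x' + D.adjoint y' = 0 :=
      ext_inner_left 𝕜 fun u => by
        simpa [Φ, inner_add_right, adjoint_inner_right] using hw (u, 0)
    have hx' : x' ∈ Lᗮ := fun l hl => by simpa [Φ] using hw (0, ⟨l, hl⟩)
    simpa [adjoint_inner_right, inner_add_right] using
      inner_right_of_mem_orthogonal hx (h x' hx' y' hBD)
  obtain ⟨⟨u, l⟩, hul⟩ := hΦ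
  have ⟨hA, hC⟩ : B u - l = -A x ∧ D u = -C x := by
    simpa [Φ, Prod.ext_iff] using congrArg ofLp hul
  refine ⟨u, ?_, ?_⟩
  · convert l.2 using 1
    linear_combination (norm := module) hA
  · linear_combination (norm := module) hC

theorem isOutputNulling_iff_isInputContaining_orthogonal :
    L.IsOutputNulling A B C D ↔ Lᗮ.IsInputContaining A.adjoint C.adjoint B.adjoint D.adjoint :=
  ⟨IsOutputNulling.isInputContaining_orthogonal, isOutputNulling_of_isInputContaining_orthogonal⟩

end Submodule

end InnerProduct

namespace Matrix

variable {𝕜 ι κ μ : Type*} [RCLike 𝕜] [Fintype ι] [DecidableEq ι]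

theorem isOutputNulling_toEuclideanLin_iff [Fintype κ] [DecidableEq κ] (A : Matrix ι ι 𝕜)
    (B : Matrix ι κ 𝕜) (C : Matrix μ ι 𝕜) (D : Matrix μ κ 𝕜)
    (V : Submodule 𝕜 (EuclideanSpace 𝕜 ι)) :
    V.IsOutputNulling A.toEuclideanLin B.toEuclideanLin C.toEuclideanLin D.toEuclideanLin ↔
      ∀ x ∈ V, ∃ u : κ → 𝕜, toLp 2 (A *ᵥ ofLp x + B *ᵥ u) ∈ V ∧ C *ᵥ ofLp x + D *ᵥ u = 0 := by
  refine forall₂_congr fun x _ => (WithLp.linearEquiv 2 𝕜 (κ → 𝕜)).exists_congr_left.trans ?_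
  simp [toLpLin_apply, ← toLp_add]

theorem isInputContaining_toEuclideanLin_iff [Fintype μ] [DecidableEq μ] (A : Matrix ι ι 𝕜)
    (B : Matrix ι μ 𝕜) (C : Matrix κ ι 𝕜) (D : Matrix κ μ 𝕜)
    (S : Submodule 𝕜 (EuclideanSpace 𝕜 ι)) :
    S.IsInputContaining A.toEuclideanLin B.toEuclideanLin C.toEuclideanLin D.toEuclideanLin ↔
      ∀ x ∈ S, ∀ y : μ → 𝕜, C *ᵥ ofLp x + D *ᵥ y = 0 → toLp 2 (A *ᵥ ofLp x + B *ᵥ y) ∈ S := by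
  refine forall₂_congr fun x _ => (WithLp.linearEquiv 2 𝕜 (μ → 𝕜)).forall_congr_left.trans ?_
  simp [toLpLin_apply, ← toLp_add]

theorem toEuclideanLin_transpose_eq_adjoint [Fintype κ] [DecidableEq κ] (A : Matrix ι κ ℝ) :
    Aᵀ.toEuclideanLin = A.toEuclideanLin.adjoint := by
  rw [← conjTranspose_eq_transpose_of_trivial, toEuclideanLin_conjTranspose_eq_adjoint]

end Matrix

/-- `L` is `(A,B,C,D)`-output nulling iff `Lᗮ` is `(Aᵀ,Cᵀ,Bᵀ,Dᵀ)`-input containing. -/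
theorem stmt6 {n m p : ℕ}
    (A : Matrix (Fin n) (Fin n) ℝ) (B : Matrix (Fin n) (Fin m) ℝ)
    (C : Matrix (Fin p) (Fin n) ℝ) (D : Matrix (Fin p) (Fin m) ℝ)
    (L : Submodule ℝ (EuclideanSpace ℝ (Fin n))) :
    (∀ x ∈ L, ∃ u : Fin m → ℝ,
      (WithLp.toLp 2 (A.mulVec x + B.mulVec u) : EuclideanSpace ℝ (Fin n)) ∈ L ∧
      C.mulVec x + D.mulVec u = 0) ↔
    (∀ x ∈ Lᗮ, ∀ u : Fin p → ℝ,
      B.transpose.mulVec x + D.transpose.mulVec u = 0 →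
      (WithLp.toLp 2 (A.transpose.mulVec x + C.transpose.mulVec u) : EuclideanSpace ℝ (Fin n)) ∈ Lᗮ) := by
  rw [← Matrix.isOutputNulling_toEuclideanLin_iff, ← Matrix.isInputContaining_toEuclideanLin_iff]
  simp only [Matrix.toEuclideanLin_transpose_eq_adjoint]
  exact Submodule.isOutputNulling_iff_isInputContaining_orthogonal
end

section
/- The intersection of two (A,B,C,D)-self bounded subspaces is (A,B,C,D)-self bounded. -/
open Matrix

variable {R ι κ ρ : Type*} [CommRing R] [Fintype ι] [Fintype κ]

def IsOutputNulling (A : Matrix ι ι R) (B : Matrix ι κ R) (C : Matrix ρ ι R) (D : Matrix ρ κ R)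
    (V : Submodule R (ι → R)) : Prop :=
  ∀ x ∈ V, ∃ u : κ → R, A *ᵥ x + B *ᵥ u ∈ V ∧ C *ᵥ x + D *ᵥ u = 0

/-- `Vstar` stands for the largest output nulling subspace `V*`; the condition reads
`V* ∩ B (ker D) ⊆ V`. -/
def IsSelfBounded (A : Matrix ι ι R) (B : Matrix ι κ R) (C : Matrix ρ ι R) (D : Matrix ρ κ R)
    (Vstar V : Submodule R (ι → R)) : Prop :=
  IsOutputNulling A B C D V ∧ ∀ u : κ → R, D *ᵥ u = 0 → B *ᵥ u ∈ Vstar → B *ᵥ u ∈ V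

section

variable {A : Matrix ι ι R} {B : Matrix ι κ R} {C : Matrix ρ ι R} {D : Matrix ρ κ R}
  {Vstar V₁ V₂ : Submodule R (ι → R)}

/-- Two admissible inputs `u₁, u₂` at `x ∈ V₁ ⊓ V₂` differ by an input in `ker D` whose image
under `B` lies in `V₁ ⊔ V₂`; the hypothesis moves it into `V₁`, so `u₂` already keeps the
next state in `V₁`. -/
theorem IsOutputNulling.inf (h₁ : IsOutputNulling A B C D V₁) (h₂ : IsOutputNulling A B C D V₂)
    (hB : ∀ u : κ → R, D *ᵥ u = 0 → B *ᵥ u ∈ V₁ ⊔ V₂ → B *ᵥ u ∈ V₁) :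
    IsOutputNulling A B C D (V₁ ⊓ V₂) := by
  rintro x ⟨hx₁, hx₂⟩
  obtain ⟨u₁, hu₁V, hu₁C⟩ := h₁ x hx₁
  obtain ⟨u₂, hu₂V, hu₂C⟩ := h₂ x hx₂
  have hD : D *ᵥ (u₁ - u₂) = 0 := by
    rw [mulVec_sub, ← add_sub_add_left_eq_sub _ _ (C *ᵥ x), hu₁C, hu₂C, sub_zero]
  have hBdiff : B *ᵥ (u₁ - u₂) = (A *ᵥ x + B *ᵥ u₁) - (A *ᵥ x + B *ᵥ u₂) := by
    rw [mulVec_sub, add_sub_add_left_eq_sub]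
  have hBV₁ : B *ᵥ (u₁ - u₂) ∈ V₁ :=
    hB _ hD (hBdiff ▸ Submodule.sub_mem_sup hu₁V hu₂V)
  refine ⟨u₂, ⟨?_, hu₂V⟩, hu₂C⟩
  rw [← sub_sub_cancel (A *ᵥ x + B *ᵥ u₁) (A *ᵥ x + B *ᵥ u₂), ← hBdiff]
  exact V₁.sub_mem hu₁V hBV₁

theorem IsSelfBounded.inf (hmax : ∀ W, IsOutputNulling A B C D W → W ≤ Vstar)
    (h₁ : IsSelfBounded A B C D Vstar V₁) (h₂ : IsSelfBounded A B C D Vstar V₂) :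
    IsSelfBounded A B C D Vstar (V₁ ⊓ V₂) :=
  ⟨h₁.1.inf h₂.1 fun u hDu hBu => h₁.2 u hDu (sup_le (hmax _ h₁.1) (hmax _ h₂.1) hBu),
    fun u hDu hBu => ⟨h₁.2 u hDu hBu, h₂.2 u hDu hBu⟩⟩

end

theorem stmt14_general {n m p : ℕ}
    (A : Matrix (Fin n) (Fin n) ℝ) (B : Matrix (Fin n) (Fin m) ℝ)
    (C : Matrix (Fin p) (Fin n) ℝ) (D : Matrix (Fin p) (Fin m) ℝ)
    (Vstar V₁ V₂ : Submodule ℝ (Fin n → ℝ))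
    (hVstarMax : ∀ W : Submodule ℝ (Fin n → ℝ),
      (∀ x ∈ W, ∃ u : Fin m → ℝ,
        A.mulVec x + B.mulVec u ∈ W ∧ C.mulVec x + D.mulVec u = 0) → W ≤ Vstar)
    (hV₁ : ∀ x ∈ V₁, ∃ u : Fin m → ℝ,
      A.mulVec x + B.mulVec u ∈ V₁ ∧ C.mulVec x + D.mulVec u = 0)
    (hV₂ : ∀ x ∈ V₂, ∃ u : Fin m → ℝ,
      A.mulVec x + B.mulVec u ∈ V₂ ∧ C.mulVec x + D.mulVec u = 0)
    (hsb₁ : ∀ u : Fin m → ℝ, D.mulVec u = 0 → B.mulVec u ∈ Vstar → B.mulVec u ∈ V₁)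
    (hsb₂ : ∀ u : Fin m → ℝ, D.mulVec u = 0 → B.mulVec u ∈ Vstar → B.mulVec u ∈ V₂) :
    (∀ x ∈ V₁ ⊓ V₂, ∃ u : Fin m → ℝ,
      A.mulVec x + B.mulVec u ∈ V₁ ⊓ V₂ ∧ C.mulVec x + D.mulVec u = 0) ∧
    (∀ u : Fin m → ℝ, D.mulVec u = 0 → B.mulVec u ∈ Vstar → B.mulVec u ∈ V₁ ⊓ V₂) :=
  IsSelfBounded.inf hVstarMax ⟨hV₁, hsb₁⟩ ⟨hV₂, hsb₂⟩

/-- The intersection of two self bounded subspaces is self bounded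
(in particular output nulling). -/
theorem stmt14 {n m p : ℕ}
    (A : Matrix (Fin n) (Fin n) ℝ) (B : Matrix (Fin n) (Fin m) ℝ)
    (C : Matrix (Fin p) (Fin n) ℝ) (D : Matrix (Fin p) (Fin m) ℝ)
    (Vstar V₁ V₂ : Submodule ℝ (Fin n → ℝ))
    (hVstarON : ∀ x ∈ Vstar, ∃ u : Fin m → ℝ,
      A.mulVec x + B.mulVec u ∈ Vstar ∧ C.mulVec x + D.mulVec u = 0)
    (hVstarMax : ∀ W : Submodule ℝ (Fin n → ℝ),
      (∀ x ∈ W, ∃ u : Fin m → ℝ,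
        A.mulVec x + B.mulVec u ∈ W ∧ C.mulVec x + D.mulVec u = 0) → W ≤ Vstar)
    (hV₁ : ∀ x ∈ V₁, ∃ u : Fin m → ℝ,
      A.mulVec x + B.mulVec u ∈ V₁ ∧ C.mulVec x + D.mulVec u = 0)
    (hV₂ : ∀ x ∈ V₂, ∃ u : Fin m → ℝ,
      A.mulVec x + B.mulVec u ∈ V₂ ∧ C.mulVec x + D.mulVec u = 0)
    (hsb₁ : ∀ u : Fin m → ℝ, D.mulVec u = 0 → B.mulVec u ∈ Vstar → B.mulVec u ∈ V₁)
    (hsb₂ : ∀ u : Fin m → ℝ, D.mulVec u = 0 → B.mulVec u ∈ Vstar → B.mulVec u ∈ V₂) :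
    (∀ x ∈ V₁ ⊓ V₂, ∃ u : Fin m → ℝ,
      A.mulVec x + B.mulVec u ∈ V₁ ⊓ V₂ ∧ C.mulVec x + D.mulVec u = 0) ∧
    (∀ u : Fin m → ℝ, D.mulVec u = 0 → B.mulVec u ∈ Vstar → B.mulVec u ∈ V₁ ⊓ V₂) :=
  stmt14_general A B C D Vstar V₁ V₂ hVstarMax hV₁ hV₂ hsb₁ hsb₂
end

section
/- The sum of two (A,B,C,D)-self hidden subspaces is (A,B,C,D)-self hidden. -/
/-!
Write `H = C⁻¹(im D)`. If `S` is input containing and `y ∈ S ∩ H`, say `C y = D v`, then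
`A y - B v ∈ S`. Since `S* ≤ S₁ ∩ S₂` by minimality and `S₂ ≤ S* + H`, the modular law gives
`S₂ ≤ S* + (S₂ ∩ H)`, so a vector of `S₁ + S₂` can be written `x₁ + y` with `x₁ ∈ S₁` and
`y ∈ S₂ ∩ H`. An admissible input `u` at `x₁ + y` then shifts to the admissible input `u + v`
at `x₁`, and `A (x₁ + y) + B u = (A x₁ + B (u + v)) + (A y - B v) ∈ S₁ + S₂`.
Self hiddenness of the sum is immediate, as `S* + H` is a subspace.
-/

open LinearMap

section InputContaining

variable {R U V W : Type*} [Ring R] [AddCommGroup U] [AddCommGroup V] [AddCommGroup W]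
  [Module R U] [Module R V] [Module R W]
  (A : V →ₗ[R] V) (B : U →ₗ[R] V) (C : V →ₗ[R] W) (D : U →ₗ[R] W)

def IsInputContaining (S : Submodule R V) : Prop :=
  ∀ x ∈ S, ∀ u, C x + D u = 0 → A x + B u ∈ S

variable {A B C D}

theorem mem_sup_comap_range_iff {T : Submodule R V} {x : V} :
    x ∈ T ⊔ (range D).comap C ↔ ∃ s ∈ T, ∃ y u, x = s + y ∧ C y = D u := by
  simp only [Submodule.mem_sup, Submodule.mem_comap, mem_range]
  constructor
  · rintro ⟨s, hs, y, ⟨u, hu⟩, rfl⟩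
    exact ⟨s, hs, y, u, rfl, hu.symm⟩
  · rintro ⟨s, hs, y, u, rfl, hu⟩
    exact ⟨s, hs, y, ⟨u, hu.symm⟩, rfl⟩

theorem IsInputContaining.apply_sub_mem {S : Submodule R V}
    (hS : IsInputContaining A B C D S) {y : V} (hy : y ∈ S) {v : U} (hv : C y = D v) :
    A y - B v ∈ S := by
  simpa [sub_eq_add_neg] using hS y hy (-v) (by simp [hv])

theorem IsInputContaining.apply_mem_sup_of_mem_sup_inf {S₁ S₂ : Submodule R V}
    (h₁ : IsInputContaining A B C D S₁) (h₂ : IsInputContaining A B C D S₂) {x : V}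
    (hx : x ∈ S₁ ⊔ (S₂ ⊓ (range D).comap C)) {u : U} (hu : C x + D u = 0) :
    A x + B u ∈ S₁ ⊔ S₂ := by
  obtain ⟨x₁, hx₁, y, ⟨hyS₂, v, hv⟩, rfl⟩ := Submodule.mem_sup.mp hx
  have hshift : C x₁ + D (u + v) = 0 := by
    rw [map_add, hv, ← hu, map_add]
    abel
  have hsplit : A (x₁ + y) + B u = (A x₁ + B (u + v)) + (A y - B v) := by
    simp only [map_add]
    abel
  rw [hsplit]
  exact Submodule.add_mem_sup (h₁ x₁ hx₁ _ hshift) (h₂.apply_sub_mem hyS₂ hv.symm)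

theorem IsInputContaining.sup {T S₁ S₂ : Submodule R V}
    (h₁ : IsInputContaining A B C D S₁) (h₂ : IsInputContaining A B C D S₂)
    (hT₁ : T ≤ S₁) (hT₂ : T ≤ S₂) (hS₂ : S₂ ≤ T ⊔ (range D).comap C) :
    IsInputContaining A B C D (S₁ ⊔ S₂) := by
  have hmodular : S₂ ≤ T ⊔ (S₂ ⊓ (range D).comap C) := by
    rw [inf_comm, ← sup_inf_assoc_of_le _ hT₂]
    exact le_inf hS₂ le_rfl
  have hcover : S₁ ⊔ S₂ ≤ S₁ ⊔ (S₂ ⊓ (range D).comap C) :=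
    sup_le le_sup_left (hmodular.trans (sup_le_sup_right hT₁ _))
  exact fun x hx u hu => h₁.apply_mem_sup_of_mem_sup_inf h₂ (hcover hx) hu

end InputContaining

theorem stmt15_general {n m p : ℕ}
    (A : Matrix (Fin n) (Fin n) ℝ) (B : Matrix (Fin n) (Fin m) ℝ)
    (C : Matrix (Fin p) (Fin n) ℝ) (D : Matrix (Fin p) (Fin m) ℝ)
    (Sstar S₁ S₂ : Submodule ℝ (Fin n → ℝ))
    (hSstarMin : ∀ W : Submodule ℝ (Fin n → ℝ),
      (∀ x ∈ W, ∀ u : Fin m → ℝ,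
        C.mulVec x + D.mulVec u = 0 → A.mulVec x + B.mulVec u ∈ W) → Sstar ≤ W)
    (hS₁ : ∀ x ∈ S₁, ∀ u : Fin m → ℝ,
      C.mulVec x + D.mulVec u = 0 → A.mulVec x + B.mulVec u ∈ S₁)
    (hS₂ : ∀ x ∈ S₂, ∀ u : Fin m → ℝ,
      C.mulVec x + D.mulVec u = 0 → A.mulVec x + B.mulVec u ∈ S₂)
    (hsh₁ : ∀ x ∈ S₁, ∃ s ∈ Sstar, ∃ y : Fin n → ℝ, ∃ u : Fin m → ℝ,
      x = s + y ∧ C.mulVec y = D.mulVec u)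
    (hsh₂ : ∀ x ∈ S₂, ∃ s ∈ Sstar, ∃ y : Fin n → ℝ, ∃ u : Fin m → ℝ,
      x = s + y ∧ C.mulVec y = D.mulVec u) :
    (∀ x ∈ S₁ ⊔ S₂, ∀ u : Fin m → ℝ,
      C.mulVec x + D.mulVec u = 0 → A.mulVec x + B.mulVec u ∈ S₁ ⊔ S₂) ∧
    (∀ x ∈ S₁ ⊔ S₂, ∃ s ∈ Sstar, ∃ y : Fin n → ℝ, ∃ u : Fin m → ℝ,
      x = s + y ∧ C.mulVec y = D.mulVec u) := by
  have hidden₁ : S₁ ≤ Sstar ⊔ (range D.mulVecLin).comap C.mulVecLin :=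
    fun x hx => mem_sup_comap_range_iff.mpr (hsh₁ x hx)
  have hidden₂ : S₂ ≤ Sstar ⊔ (range D.mulVecLin).comap C.mulVecLin :=
    fun x hx => mem_sup_comap_range_iff.mpr (hsh₂ x hx)
  have hIC₁ : IsInputContaining A.mulVecLin B.mulVecLin C.mulVecLin D.mulVecLin S₁ := hS₁
  have hIC₂ : IsInputContaining A.mulVecLin B.mulVecLin C.mulVecLin D.mulVecLin S₂ := hS₂
  exact ⟨hIC₁.sup hIC₂ (hSstarMin S₁ hS₁) (hSstarMin S₂ hS₂) hidden₂,
    fun x hx => mem_sup_comap_range_iff.mp (sup_le hidden₁ hidden₂ hx)⟩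

/-- The sum of two self hidden subspaces is self hidden
(in particular input containing). -/
theorem stmt15 {n m p : ℕ}
    (A : Matrix (Fin n) (Fin n) ℝ) (B : Matrix (Fin n) (Fin m) ℝ)
    (C : Matrix (Fin p) (Fin n) ℝ) (D : Matrix (Fin p) (Fin m) ℝ)
    (Sstar S₁ S₂ : Submodule ℝ (Fin n → ℝ))
    (hSstarIC : ∀ x ∈ Sstar, ∀ u : Fin m → ℝ,
      C.mulVec x + D.mulVec u = 0 → A.mulVec x + B.mulVec u ∈ Sstar)
    (hSstarMin : ∀ W : Submodule ℝ (Fin n → ℝ),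
      (∀ x ∈ W, ∀ u : Fin m → ℝ,
        C.mulVec x + D.mulVec u = 0 → A.mulVec x + B.mulVec u ∈ W) → Sstar ≤ W)
    (hS₁ : ∀ x ∈ S₁, ∀ u : Fin m → ℝ,
      C.mulVec x + D.mulVec u = 0 → A.mulVec x + B.mulVec u ∈ S₁)
    (hS₂ : ∀ x ∈ S₂, ∀ u : Fin m → ℝ,
      C.mulVec x + D.mulVec u = 0 → A.mulVec x + B.mulVec u ∈ S₂)
    (hsh₁ : ∀ x ∈ S₁, ∃ s ∈ Sstar, ∃ y : Fin n → ℝ, ∃ u : Fin m → ℝ,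
      x = s + y ∧ C.mulVec y = D.mulVec u)
    (hsh₂ : ∀ x ∈ S₂, ∃ s ∈ Sstar, ∃ y : Fin n → ℝ, ∃ u : Fin m → ℝ,
      x = s + y ∧ C.mulVec y = D.mulVec u) :
    (∀ x ∈ S₁ ⊔ S₂, ∀ u : Fin m → ℝ,
      C.mulVec x + D.mulVec u = 0 → A.mulVec x + B.mulVec u ∈ S₁ ⊔ S₂) ∧
    (∀ x ∈ S₁ ⊔ S₂, ∃ s ∈ Sstar, ∃ y : Fin n → ℝ, ∃ u : Fin m → ℝ,
      x = s + y ∧ C.mulVec y = D.mulVec u) :=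
  stmt15_general A B C D Sstar S₁ S₂ hSstarMin hS₁ hS₂ hsh₁ hsh₂
end
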